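/- If c < 1/√γ and X is the number of n-labeled triangulations of [123] contained in Y₂(n, c/√n), then E[X] ≤ (c/√n) · Σ_{k=0}^{n-3} (γ c²)^k ≤ (c/√n) · 1/(1 − γc²). -/

import Mathlib

/-! Writing `p = c/√n`, a triangulation with `k` internal vertices contributes
`p^(2k+1) = p · (p²)^k`, and there are at most `(γn)^k` of them; since `n p² = c²`,
level `k` contributes at most `p (γc²)^k`. The condition `c < 1/√γ` says `γc² < 1`,
so the geometric partial sum is at most `1/(1 - γc²)`. -/

open Finset

lemma mul_sq_div_sqrt_le (c x : ℝ) : x * (c / √x) ^ 2 ≤ c ^ 2 := by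
  rcases le_or_gt x 0 with hx | hx
  · simp [Real.sqrt_eq_zero'.mpr hx, sq_nonneg]
  · rw [div_pow, Real.sq_sqrt hx.le, mul_div_cancel₀ _ hx.ne']

lemma mul_pow_two_mul_add_one_le {N a c p x : ℝ} {k : ℕ} (ha : 0 ≤ a) (hp : 0 ≤ p) (hx : 0 ≤ x)
    (hxp : x * p ^ 2 ≤ c ^ 2) (hN : N ≤ (a * x) ^ k) :
    N * p ^ (2 * k + 1) ≤ p * (a * c ^ 2) ^ k :=
  calc N * p ^ (2 * k + 1) = p * (N * (p ^ 2) ^ k) := by ring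
    _ ≤ p * ((a * x) ^ k * (p ^ 2) ^ k) := by gcongr
    _ = p * (a * (x * p ^ 2)) ^ k := by ring
    _ ≤ p * (a * c ^ 2) ^ k := by gcongr

lemma geom_sum_range_le_one_div {r : ℝ} (hr0 : 0 ≤ r) (hr1 : r < 1) (m : ℕ) :
    ∑ k ∈ range m, r ^ k ≤ 1 / (1 - r) := by
  have h := geom_sum_Ico_le_of_lt_one (m := 0) (n := m) hr0 hr1
  rwa [pow_zero, ← range_eq_Ico] at h

lemma mul_sq_lt_one_of_lt_one_div_sqrt {a c : ℝ} (ha : 0 < a) (hc0 : 0 ≤ c)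
    (hc : c < 1 / √a) : a * c ^ 2 < 1 := by
  rw [one_div, ← Real.sqrt_inv, Real.lt_sqrt hc0] at hc
  calc a * c ^ 2 < a * a⁻¹ := by gcongr
    _ = 1 := mul_inv_cancel₀ ha.ne'

theorem expected_triangulations_bound_general (c : ℝ) (n : ℕ) (hc0 : 0 < c)
    (hc : c < 1 / Real.sqrt ((256 : ℝ) / 27))
    (N : ℕ → ℕ) (hN : ∀ k : ℕ, (N k : ℝ) ≤ ((256 : ℝ) / 27 * (n : ℝ)) ^ k) :
    (∑ k ∈ Finset.range (n - 2), (N k : ℝ) * (c / Real.sqrt n) ^ (2 * k + 1) ≤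
        c / Real.sqrt n * ∑ k ∈ Finset.range (n - 2), ((256 : ℝ) / 27 * c ^ 2) ^ k) ∧
      (c / Real.sqrt n * ∑ k ∈ Finset.range (n - 2), ((256 : ℝ) / 27 * c ^ 2) ^ k ≤
        c / Real.sqrt n * (1 / (1 - (256 : ℝ) / 27 * c ^ 2))) := by
  have hp : 0 ≤ c / √n := by positivity
  have hr : (256 : ℝ) / 27 * c ^ 2 < 1 :=
    mul_sq_lt_one_of_lt_one_div_sqrt (by norm_num) hc0.le hc
  refine ⟨?_, mul_le_mul_of_nonneg_left (geom_sum_range_le_one_div (by positivity) hr _) hp⟩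
  rw [mul_sum]
  exact sum_le_sum fun k _ => mul_pow_two_mul_add_one_le (by norm_num) hp n.cast_nonneg
    (mul_sq_div_sqrt_le c n) (hN k)

/-- If `c < 1/√γ` (`γ = 256/27`) and there are at most `(γn)^k` properly `n`-labeled
triangulations of `[123]` with `k` internal vertices, each with `2k+1` faces present
independently with probability `p = c/√n`, then the expected number of triangulations of
`[123]` in `Y₂(n, c/√n)` satisfies
`E[X] ≤ (c/√n) Σ_{k=0}^{n-3} (γc²)^k ≤ (c/√n) · 1/(1 − γc²)`. -/
theorem expected_triangulations_bound (c : ℝ) (n : ℕ) (hn : 3 ≤ n) (hc0 : 0 < c)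
    (hc : c < 1 / Real.sqrt ((256 : ℝ) / 27))
    (N : ℕ → ℕ) (hN : ∀ k : ℕ, (N k : ℝ) ≤ ((256 : ℝ) / 27 * (n : ℝ)) ^ k) :
    (∑ k ∈ Finset.range (n - 2), (N k : ℝ) * (c / Real.sqrt n) ^ (2 * k + 1) ≤
        c / Real.sqrt n * ∑ k ∈ Finset.range (n - 2), ((256 : ℝ) / 27 * c ^ 2) ^ k) ∧
      (c / Real.sqrt n * ∑ k ∈ Finset.range (n - 2), ((256 : ℝ) / 27 * c ^ 2) ^ k ≤
        c / Real.sqrt n * (1 / (1 - (256 : ℝ) / 27 * c ^ 2))) :=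
  expected_triangulations_bound_general c n hc0 hc N hN
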